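/- The restriction of the operator J to the 6-dimensional subspace V spanned by w_0∧w_1, w_0∧w_2, w_1∧w_2, w_0∧w_1∧w_2∧w̄_0, w_0∧w_1∧w_2∧w̄_1, w_0∧w_1∧w_2∧w̄_2 equals multiplication by −2i, and hence has trace −12i; in particular J does not lie in the Lie algebra generated by the operators L_j, Λ_j, V_j, A_j (since every element of that Lie algebra restricts to V with trace zero). -/

import Mathlib

/-!
`J` is the derivation with `J w_j = -i w_j` and `J w̄_j = i w̄_j`, so it acts on the monomials
`w_j ∧ w_k` and `w_0 ∧ w_1 ∧ w_2 ∧ w̄_j` spanning `V` by `-2i`, and its trace on `V` is `-12i`.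
These six monomials are pairwise orthogonal, and each of `L_j, Λ_j, V_j, A_j` sends every one of
them to a multiple of a different one. So the generators preserve `V` and restrict to traceless
endomorphisms of it; since `tr [A, B] = 0`, such endomorphisms form a Lie subalgebra, which
therefore contains the Lie algebra they generate but not `J`.
-/

/-- Index set for the orthonormal basis `v_{ij}`, `i ∈ {1,2}`, `j ∈ {0,1,2}`:
`(0, j)` stands for `v_{1j}` and `(1, j)` for `v_{2j}`. -/
abbrev Idx := Fin 2 × Fin 3

/-- A linear order key on the index set. -/
def key (a : Idx) : ℕ := a.1.val * 3 + a.2.val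

noncomputable section

/-- Concrete model of the complexified exterior algebra `Λ*W ⊗ ℂ` of the
6-dimensional real inner product space `W` with orthonormal basis `v_{ij}`:
complex-valued functions on subsets of the index set, with the induced
Hermitian inner product (the wedge monomials in the `v_{ij}` are orthonormal). -/
abbrev EWc := EuclideanSpace ℂ (Finset Idx)

/-- The sign `(-1)^{#{b ∈ S | b < a}}`. -/
def sgnc (a : Idx) (S : Finset Idx) : ℂ :=
  (-1 : ℂ) ^ (S.filter (fun b => key b < key a)).card

/-- `Eop a` is the wedge (exterior multiplication) operator with `v_a`. -/
def Eop (a : Idx) : Module.End ℂ EWc where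
  toFun f := WithLp.toLp 2 (fun (S : Finset Idx) => if a ∈ S then sgnc a (S.erase a) * f (S.erase a) else 0)
  map_add' f g := by
    ext S
    by_cases h : a ∈ S <;> simp [h, mul_add]
  map_smul' c f := by
    ext S
    by_cases h : a ∈ S <;> simp [h] <;> ring

/-- `Iop a` is the contraction operator with the vector dual to `v_a`. -/
def Iop (a : Idx) : Module.End ℂ EWc where
  toFun f := WithLp.toLp 2 (fun (S : Finset Idx) => if a ∈ S then 0 else sgnc a S * f (insert a S))
  map_add' f g := by
    ext S
    by_cases h : a ∈ S <;> simp [h, mul_add]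
  map_smul' c f := by
    ext S
    by_cases h : a ∈ S <;> simp [h] <;> ring

/-- `J = Σ_j (E_{2j}I_{1j} - E_{1j}I_{2j})`: the (complexification of the)
derivation of `Λ*W` with `J(v_{1j}) = v_{2j}` and `J(v_{2j}) = -v_{1j}`. -/
def Jop : Module.End ℂ EWc :=
  ∑ j : Fin 3, (Eop (1, j) ∘ₗ Iop (0, j) - Eop (0, j) ∘ₗ Iop (1, j))

/-- The vacuum (the unit `1 ∈ Λ⁰`). -/
def vac : EWc := WithLp.toLp 2 (fun S => if S = ∅ then 1 else 0)

/-- Wedge operator with `w_j = v_{1j} + i v_{2j}`. -/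
def Ew (j : Fin 3) : Module.End ℂ EWc := Eop (0, j) + Complex.I • Eop (1, j)

/-- Wedge operator with `w̄_j = v_{1j} - i v_{2j}`. -/
def Ewb (j : Fin 3) : Module.End ℂ EWc := Eop (0, j) - Complex.I • Eop (1, j)

/-- Contraction operator `I_{w_j} = I_{1j} - i I_{2j}`. -/
def Iw (j : Fin 3) : Module.End ℂ EWc := Iop (0, j) - Complex.I • Iop (1, j)

/-- Contraction operator `I_{w̄_j} = I_{1j} + i I_{2j}`. -/
def Iwb (j : Fin 3) : Module.End ℂ EWc := Iop (0, j) + Complex.I • Iop (1, j)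

/-- The element `w_j = v_{1j} + i v_{2j}` of `Λ¹`. -/
def wv (j : Fin 3) : EWc := Ew j vac

/-- The element `w̄_j = v_{1j} - i v_{2j}` of `Λ¹`. -/
def wbv (j : Fin 3) : EWc := Ewb j vac

/-- `L_0, L_1, L_2`: wedge with `ω_D = v_{11}∧v_{12} + v_{21}∧v_{22}`,
`-ω_2 = -(v_{10}∧v_{12} + v_{20}∧v_{22})`, `ω_1 = v_{10}∧v_{11} + v_{20}∧v_{21}`. -/
def Lop : Fin 3 → Module.End ℂ EWc
  | 0 => Eop (0, 1) ∘ₗ Eop (0, 2) + Eop (1, 1) ∘ₗ Eop (1, 2)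
  | 1 => -(Eop (0, 0) ∘ₗ Eop (0, 2) + Eop (1, 0) ∘ₗ Eop (1, 2))
  | 2 => Eop (0, 0) ∘ₗ Eop (0, 1) + Eop (1, 0) ∘ₗ Eop (1, 1)

/-- `V_j`: wedge with the volume form `v_{1j} ∧ v_{2j}`. -/
def Vop (j : Fin 3) : Module.End ℂ EWc := Eop (0, j) ∘ₗ Eop (1, j)

/-- `Λ_j = L_j*`, Hermitian adjoint. -/
def Λop (j : Fin 3) : Module.End ℂ EWc := LinearMap.adjoint (Lop j)

/-- `A_j = V_j*`, Hermitian adjoint. -/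
def Aop (j : Fin 3) : Module.End ℂ EWc := LinearMap.adjoint (Vop j)

/-- `H_j = [L_j, Λ_j]`. -/
def Hop (j : Fin 3) : Module.End ℂ EWc := ⁅Lop j, Λop j⁆

/-- The six spanning elements `w_0∧w_1, w_0∧w_2, w_1∧w_2,
`w_0∧w_1∧w_2∧w̄_0, w_0∧w_1∧w_2∧w̄_1, w_0∧w_1∧w_2∧w̄_2`. -/
def vvGen : Fin 6 → EWc
  | 0 => Ew 0 (Ew 1 vac)
  | 1 => Ew 0 (Ew 2 vac)
  | 2 => Ew 1 (Ew 2 vac)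
  | 3 => Ew 0 (Ew 1 (Ew 2 (Ewb 0 vac)))
  | 4 => Ew 0 (Ew 1 (Ew 2 (Ewb 1 vac)))
  | 5 => Ew 0 (Ew 1 (Ew 2 (Ewb 2 vac)))

/-- The 6-dimensional subspace `V` of `Λ*W ⊗ ℂ`. -/
def VV : Submodule ℂ EWc := Submodule.span ℂ (Set.range vvGen)

/-- The twelve canonical operators `L_j, Λ_j, V_j, A_j` (`j = 0, 1, 2`). -/
def allOps : Set (Module.End ℂ EWc) :=
  {Lop 0, Lop 1, Lop 2, Λop 0, Λop 1, Λop 2, Vop 0, Vop 1, Vop 2, Aop 0, Aop 1, Aop 2}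

attribute [local instance 100] LieRing.ofAssociativeRing

open Set
open scoped ComplexInnerProductSpace

namespace Submodule

variable {R M : Type*} [CommRing R] [AddCommGroup M] [Module R M]

def tracelessOn (p : Submodule R M) : LieSubalgebra R (Module.End R M) where
  carrier := {T | ∃ h : ∀ x ∈ p, T x ∈ p, LinearMap.trace R p (T.restrict h) = 0}
  zero_mem' := ⟨fun _ _ => p.zero_mem, by
    rw [show (0 : Module.End R M).restrict _ = 0 from rfl, map_zero]⟩
  add_mem' := by
    rintro A B ⟨hA, hA0⟩ ⟨hB, hB0⟩
    refine ⟨fun x hx => p.add_mem (hA x hx) (hB x hx), ?_⟩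
    rw [show (A + B).restrict _ = A.restrict hA + B.restrict hB from rfl, map_add, hA0, hB0,
      add_zero]
  smul_mem' := by
    rintro c A ⟨hA, hA0⟩
    refine ⟨fun x hx => p.smul_mem c (hA x hx), ?_⟩
    rw [show (c • A).restrict _ = c • A.restrict hA from rfl, map_smul, hA0, smul_zero]
  lie_mem' := by
    rintro A B ⟨hA, -⟩ ⟨hB, -⟩
    refine ⟨fun x hx => p.sub_mem (hA _ (hB x hx)) (hB _ (hA x hx)), ?_⟩
    rw [show ⁅A, B⁆.restrict _ = ⁅A.restrict hA, B.restrict hB⁆ from rfl, LinearMap.trace_lie]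

/-- The matrix of the restriction of `T` in the basis `v` has zero diagonal. -/
theorem mem_tracelessOn_span {ι : Type*} [Fintype ι] [DecidableEq ι] {v : ι → M}
    (hv : LinearIndependent R v) {T : Module.End R M} (t : ι → ι) (ht : ∀ k, t k ≠ k)
    (hT : ∀ k, T (v k) ∈ R ∙ v (t k)) : T ∈ (span R (range v)).tracelessOn := by
  have hle : span R (range v) ≤ (span R (range v)).comap T := span_le.2 <|
    range_subset_iff.2 fun k => span_mono (singleton_subset_iff.2 (mem_range_self (t k))) (hT k)
  have hmaps : ∀ x ∈ span R (range v), T x ∈ span R (range v) := fun _ hx => hle hx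
  refine ⟨hmaps, ?_⟩
  let b := Module.Basis.span hv
  rw [LinearMap.trace_eq_matrix_trace R b, Matrix.trace]
  refine Finset.sum_eq_zero fun k _ => ?_
  obtain ⟨c, hc⟩ := mem_span_singleton.1 (hT k)
  have hbk : T.restrict hmaps (b k) = c • b (t k) := by
    ext
    rw [LinearMap.coe_restrict_apply, coe_smul, Module.Basis.span_apply,
      Module.Basis.span_apply, hc]
  rw [Matrix.diag_apply, LinearMap.toMatrix_apply, hbk, map_smul, b.repr_self,
    Finsupp.smul_apply, Finsupp.single_eq_of_ne' (ht k), smul_zero]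

theorem trace_restrict_of_eqOn_smul {p : Submodule R M} [Module.Free R p] [Module.Finite R p]
    {T : Module.End R M} {c : R} (hT : ∀ x ∈ p, T x = c • x) (h : ∀ x ∈ p, T x ∈ p) :
    LinearMap.trace R p (T.restrict h) = c * Module.finrank R p := by
  have : T.restrict h = c • 1 := by
    ext x
    exact hT x x.2
  rw [this, map_smul, LinearMap.trace_one, smul_eq_mul]

end Submodule

theorem adjoint_Eop (a : Idx) : LinearMap.adjoint (Eop a) = Iop a := by
  let e := (EuclideanSpace.basisFun (Finset Idx) ℂ).toBasis
  refine ((LinearMap.eq_adjoint_iff_basis e e (Iop a) (Eop a)).2 fun S T => ?_).symm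
  simp only [e, OrthonormalBasis.coe_toBasis, EuclideanSpace.basisFun_apply,
    EuclideanSpace.inner_single_left, EuclideanSpace.inner_single_right, Iop, Eop,
    LinearMap.coe_mk, AddHom.coe_mk, PiLp.single_apply]
  -- Both entries vanish unless `S = insert a T` with `a ∉ T`, and then both are `sgnc a T`.
  split_ifs <;> simp_all [sgnc] <;> grind

def canonicalOps : Fin 12 → Module.End ℂ EWc :=
  ![Lop 0, Lop 1, Lop 2, Λop 0, Λop 1, Λop 2, Vop 0, Vop 1, Vop 2, Aop 0, Aop 1, Aop 2]

theorem allOps_subset_range_canonicalOps : allOps ⊆ range canonicalOps := by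
  simp only [allOps, insert_subset_iff, singleton_subset_iff]
  exact ⟨⟨0, rfl⟩, ⟨1, rfl⟩, ⟨2, rfl⟩, ⟨3, rfl⟩, ⟨4, rfl⟩, ⟨5, rfl⟩, ⟨6, rfl⟩, ⟨7, rfl⟩,
    ⟨8, rfl⟩, ⟨9, rfl⟩, ⟨10, rfl⟩, ⟨11, rfl⟩⟩

/-! The same operators on Gaussian-integer valued vectors, where their action on the generators
of `VV` can be checked by evaluation; `toEWc` transports the results to `EWc`. -/
namespace GaussianModel

abbrev Vec := Finset Idx → GaussianInt

def sign (a : Idx) (S : Finset Idx) : GaussianInt :=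
  (-1) ^ (S.filter (fun b => key b < key a)).card

def wedge (a : Idx) (f : Vec) : Vec :=
  fun S => if a ∈ S then sign a (S.erase a) * f (S.erase a) else 0

def contract (a : Idx) (f : Vec) : Vec :=
  fun S => if a ∈ S then 0 else sign a S * f (insert a S)

def vacuum : Vec := fun S => if S = ∅ then 1 else 0

def wedgeW (j : Fin 3) (f : Vec) : Vec :=
  wedge (0, j) f + (⟨0, 1⟩ : GaussianInt) • wedge (1, j) f

def wedgeWbar (j : Fin 3) (f : Vec) : Vec :=
  wedge (0, j) f - (⟨0, 1⟩ : GaussianInt) • wedge (1, j) f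

def gen : Fin 6 → Vec
  | 0 => wedgeW 0 (wedgeW 1 vacuum)
  | 1 => wedgeW 0 (wedgeW 2 vacuum)
  | 2 => wedgeW 1 (wedgeW 2 vacuum)
  | 3 => wedgeW 0 (wedgeW 1 (wedgeW 2 (wedgeWbar 0 vacuum)))
  | 4 => wedgeW 0 (wedgeW 1 (wedgeW 2 (wedgeWbar 1 vacuum)))
  | 5 => wedgeW 0 (wedgeW 1 (wedgeW 2 (wedgeWbar 2 vacuum)))

def J (f : Vec) : Vec :=
  ∑ j : Fin 3, (wedge (1, j) (contract (0, j) f) - wedge (0, j) (contract (1, j) f))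

def ops : Fin 12 → Vec → Vec := ![
  wedge (0, 1) ∘ wedge (0, 2) + wedge (1, 1) ∘ wedge (1, 2),
  -(wedge (0, 0) ∘ wedge (0, 2) + wedge (1, 0) ∘ wedge (1, 2)),
  wedge (0, 0) ∘ wedge (0, 1) + wedge (1, 0) ∘ wedge (1, 1),
  contract (0, 2) ∘ contract (0, 1) + contract (1, 2) ∘ contract (1, 1),
  -(contract (0, 2) ∘ contract (0, 0) + contract (1, 2) ∘ contract (1, 0)),
  contract (0, 1) ∘ contract (0, 0) + contract (1, 1) ∘ contract (1, 0),
  wedge (0, 0) ∘ wedge (1, 0),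
  wedge (0, 1) ∘ wedge (1, 1),
  wedge (0, 2) ∘ wedge (1, 2),
  contract (1, 0) ∘ contract (0, 0),
  contract (1, 1) ∘ contract (0, 1),
  contract (1, 2) ∘ contract (0, 2)]

/-- `2 • ops n (gen k) = coeff n k • gen (target n k)`; where `coeff n k = 0` the entry
`target n k` is an arbitrary index other than `k`. -/
def coeff : Fin 12 → Fin 6 → GaussianInt := ![
  ![-1, -1, 0, 0, 0, 0],
  ![1, 0, -1, 0, 0, 0],
  ![0, 1, 1, 0, 0, 0],
  ![0, 0, 0, 0, -4, -4],
  ![0, 0, 0, 4, 0, -4],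
  ![0, 0, 0, 4, 4, 0],
  ![0, 0, ⟨0, 1⟩, 0, 0, 0],
  ![0, ⟨0, -1⟩, 0, 0, 0, 0],
  ![⟨0, 1⟩, 0, 0, 0, 0, 0],
  ![0, 0, 0, ⟨0, -4⟩, 0, 0],
  ![0, 0, 0, 0, ⟨0, 4⟩, 0],
  ![0, 0, 0, 0, 0, ⟨0, -4⟩]]

def target : Fin 12 → Fin 6 → Fin 6 := ![
  ![4, 5, 0, 0, 0, 0],
  ![3, 0, 5, 0, 0, 0],
  ![1, 3, 4, 0, 0, 0],
  ![1, 0, 0, 0, 0, 1],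
  ![1, 0, 0, 0, 0, 2],
  ![1, 0, 0, 1, 2, 0],
  ![1, 0, 3, 0, 0, 0],
  ![1, 4, 0, 0, 0, 0],
  ![5, 0, 0, 0, 0, 0],
  ![1, 0, 0, 2, 0, 0],
  ![1, 0, 0, 0, 1, 0],
  ![1, 0, 0, 0, 0, 0]]

theorem target_ne : ∀ n k, target n k ≠ k := by decide

theorem two_smul_ops_gen :
    ∀ n k, (2 : GaussianInt) • ops n (gen k) = coeff n k • gen (target n k) := by
  decide +kernel

theorem J_gen : ∀ k, J (gen k) = (⟨0, -2⟩ : GaussianInt) • gen k := by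
  decide +kernel

theorem gen_ne_zero : ∀ k, gen k ≠ 0 := by
  decide +kernel

theorem gen_orthogonal : ∀ k l, k ≠ l → ∑ S, star (gen k S) * gen l S = 0 := by
  decide +kernel

def toEWc : Vec →ₛₗ[GaussianInt.toComplex] EWc where
  toFun f := WithLp.toLp 2 fun S => GaussianInt.toComplex (f S)
  map_add' f g := by ext; simp
  map_smul' c f := by ext; simp

theorem toEWc_apply (f : Vec) (S : Finset Idx) : toEWc f S = GaussianInt.toComplex (f S) := rfl

theorem toEWc_injective : Function.Injective toEWc := fun f g h =>
  funext fun S => GaussianInt.toComplex_injective (by rw [← toEWc_apply, h, toEWc_apply])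

theorem inner_toEWc (f g : Vec) :
    ⟪toEWc f, toEWc g⟫ = GaussianInt.toComplex (∑ S, star (f S) * g S) := by
  simp [PiLp.inner_apply, toEWc_apply, GaussianInt.toComplex_star, mul_comm]

theorem toEWc_wedge (a : Idx) (f : Vec) : toEWc (wedge a f) = Eop a (toEWc f) := by
  ext S
  by_cases h : a ∈ S <;> simp [toEWc_apply, wedge, Eop, sign, sgnc, h]

theorem toEWc_contract (a : Idx) (f : Vec) : toEWc (contract a f) = Iop a (toEWc f) := by
  ext S
  by_cases h : a ∈ S <;> simp [toEWc_apply, contract, Iop, sign, sgnc, h]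

theorem toEWc_vacuum : toEWc vacuum = vac := by
  ext S
  by_cases h : S = ∅ <;> simp [toEWc_apply, vacuum, vac, h]

theorem toEWc_gen (k : Fin 6) : toEWc (gen k) = vvGen k := by
  fin_cases k <;>
    simp [gen, vvGen, wedgeW, wedgeWbar, Ew, Ewb, toEWc_wedge, toEWc_vacuum,
      GaussianInt.toComplex_def']

theorem toEWc_J (f : Vec) : toEWc (J f) = Jop (toEWc f) := by
  simp [J, Jop, toEWc_wedge, toEWc_contract]

theorem toEWc_ops (n : Fin 12) (f : Vec) : toEWc (ops n f) = canonicalOps n (toEWc f) := by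
  fin_cases n <;>
    simp [ops, canonicalOps, Lop, Λop, Vop, Aop, LinearMap.adjoint_comp, adjoint_Eop,
      toEWc_wedge, toEWc_contract]

end GaussianModel

open GaussianModel

theorem vvGen_linearIndependent : LinearIndependent ℂ vvGen := by
  refine linearIndependent_of_ne_zero_of_inner_eq_zero (fun k => ?_) fun k l hkl => ?_
  · rw [← toEWc_gen, Ne, ← map_zero toEWc]
    exact toEWc_injective.ne (gen_ne_zero k)
  · show ⟪vvGen k, vvGen l⟫ = 0
    rw [← toEWc_gen, ← toEWc_gen, inner_toEWc, gen_orthogonal k l hkl, map_zero]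

theorem Jop_vvGen (k : Fin 6) : Jop (vvGen k) = (-(2 * Complex.I)) • vvGen k := by
  rw [← toEWc_gen, ← toEWc_J, J_gen, map_smulₛₗ, GaussianInt.toComplex_def']
  push_cast
  ring_nf

theorem canonicalOps_vvGen_mem (n : Fin 12) (k : Fin 6) :
    canonicalOps n (vvGen k) ∈ ℂ ∙ vvGen (target n k) := by
  have h := congrArg toEWc (two_smul_ops_gen n k)
  rw [map_smulₛₗ, map_smulₛₗ, toEWc_ops, toEWc_gen, toEWc_gen, map_ofNat] at h
  rw [← Submodule.smul_mem_iff _ (two_ne_zero : (2 : ℂ) ≠ 0), h]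
  exact Submodule.smul_mem _ _ (Submodule.mem_span_singleton_self _)

theorem lieSpan_allOps_le_tracelessOn :
    LieSubalgebra.lieSpan ℂ (Module.End ℂ EWc) allOps ≤ VV.tracelessOn :=
  LieSubalgebra.lieSpan_le.2 <| allOps_subset_range_canonicalOps.trans <| range_subset_iff.2
    fun n => Submodule.mem_tracelessOn_span vvGen_linearIndependent (target n) (target_ne n)
      (canonicalOps_vvGen_mem n)

/-- `J` restricted to `V` equals multiplication by `-2i`, hence has trace `-12i`;
in particular `J` does not lie in the Lie algebra generated by the `L_j, Λ_j, V_j, A_j`. -/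
theorem J_not_in_L :
    (∀ x ∈ VV, Jop x = (-(2 * Complex.I)) • x) ∧
    (∀ h : ∀ x ∈ VV, Jop x ∈ VV,
      LinearMap.trace ℂ ↥VV (Jop.restrict h) = -(12 * Complex.I)) ∧
    Jop ∉ LieSubalgebra.lieSpan ℂ (Module.End ℂ EWc) allOps := by
  have hJ : ∀ x ∈ VV, Jop x = (-(2 * Complex.I)) • x := fun x hx =>
    LinearMap.eqOn_span (g := (-(2 * Complex.I)) • LinearMap.id)
      (forall_mem_range.2 Jop_vvGen) hx
  have htrace : ∀ h : ∀ x ∈ VV, Jop x ∈ VV,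
      LinearMap.trace ℂ ↥VV (Jop.restrict h) = -(12 * Complex.I) := fun h => by
    rw [Submodule.trace_restrict_of_eqOn_smul hJ, VV,
      finrank_span_eq_card vvGen_linearIndependent, Fintype.card_fin]
    push_cast
    ring
  refine ⟨hJ, htrace, fun hmem => ?_⟩
  obtain ⟨h, htraceless⟩ := lieSpan_allOps_le_tracelessOn hmem
  rw [htrace h] at htraceless
  simp at htraceless
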